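/- Let N be an n-bit Fibonacci NLFSR with f_{n−1} = x_0 ⊕ g, let P be the set of supports of the monomials of the ANF of g (so every S ∈ P satisfies S ⊆ {1,…,n−1}), and assume some S ∈ P has |S| ≥ 2. Set τ = max{ max(S) − min(S) : S ∈ P, |S| ≥ 2 }. Let Ñ be the n-bit NLFSR with feedback functions f̃_i = x_{(i+1) mod n} ⊕ g̃_i, where g̃_i is the XOR of the monomials p_{S − min(S)} over all S ∈ P with min(S) ≤ n−1−τ and n−1−min(S) = i, together with, when i = τ, the monomials p_{S−(n−1−τ)} over all S ∈ P with min(S) > n−1−τ (and g̃_i = 0 when no such monomial exists). Then Ñ is uniform and Ñ is equivalent to N. -/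

import Mathlib

/-- The state-update map of an NLFSR given by feedback functions `F`. -/
def nlfsrStep (n : ℕ) (F : Fin n → (Fin n → Bool) → Bool) (s : Fin n → Bool) : Fin n → Bool :=
  fun i => F i s

/-- The state of the NLFSR at time `t`, starting from initial state `s0`. -/
def stateAt (n : ℕ) (F : Fin n → (Fin n → Bool) → Bool) (s0 : Fin n → Bool) (t : ℕ) :
    Fin n → Bool :=
  (nlfsrStep n F)^[t] s0

/-- The index `(i+1) mod n`. -/
def succIdx {n : ℕ} (i : Fin n) : Fin n :=
  ⟨((i : ℕ) + 1) % n, Nat.mod_lt _ i.pos⟩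

/-- Two NLFSRs are equivalent if there are initial states (possibly different for each)
from which they generate the same output sequences (the output is bit 0). -/
def EquivalentN (n : ℕ) (F F' : Fin n → (Fin n → Bool) → Bool) : Prop :=
  ∃ s0 s0' : Fin n → Bool, ∀ (t : ℕ) (z : Fin n), (z : ℕ) = 0 →
    stateAt n F s0 t z = stateAt n F' s0' t z

/-- The dependence set of a Boolean function of `n` variables. -/
def depF (n : ℕ) (f : (Fin n → Bool) → Bool) : Finset (Fin n) :=
  Finset.univ.filter
    (fun i => ∃ s : Fin n → Bool, f (Function.update s i false) ≠ f (Function.update s i true))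

/-- The (unique) function `g_i` with `f_i = x_{i+1} ⊕ g_i`. -/
def gfun (n : ℕ) (F : Fin n → (Fin n → Bool) → Bool) (i : Fin n) : (Fin n → Bool) → Bool :=
  fun s => xor (F i s) (s (succIdx i))

/-- All feedback functions are singular: `f_i = x_{(i+1) mod n} ⊕ g_i` with
`(i+1) mod n ∉ dep(g_i)`. -/
def SingularAll (n : ℕ) (F : Fin n → (Fin n → Bool) → Bool) : Prop :=
  ∀ i : Fin n, succIdx i ∉ depF n (gfun n F i)

/-- The terminal bit: the largest index `i ∈ {0,…,n−1}` such that `f_j = x_{j+1}`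
for all `j < i`. -/
noncomputable def terminalBit (n : ℕ) (F : Fin n → (Fin n → Bool) → Bool) : ℕ :=
  sSup {i : ℕ | i < n ∧ ∀ j : Fin n, (j : ℕ) < i → ∀ s, F j s = s (succIdx j)}

/-- A uniform NLFSR: all feedback functions are singular and, for every bit `i`
above the terminal bit `τ`, every index in `dep(g_i)` is at most `τ`. -/
def UniformN (n : ℕ) (F : Fin n → (Fin n → Bool) → Bool) : Prop :=
  SingularAll n F ∧
    ∀ i : Fin n, terminalBit n F < (i : ℕ) →
      ∀ k ∈ depF n (gfun n F i), (k : ℕ) ≤ terminalBit n F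

/-- The monomial `p_S(x) = ∧_{i ∈ S} x_i`. -/
def monomial (n : ℕ) (S : Finset (Fin n)) : (Fin n → Bool) → Bool :=
  fun s => decide (∀ i ∈ S, s i = true)

/-- The ANF coefficient of `f` at the monomial with support `S`
(Möbius inversion over `GF(2)`). -/
def anfCoeff (n : ℕ) (f : (Fin n → Bool) → Bool) (S : Finset (Fin n)) : Bool :=
  decide (Odd (S.powerset.filter (fun T => f (fun i => decide (i ∈ T)) = true)).card)

/-- `S − k = {(i − k) mod n : i ∈ S}`. -/
def shiftSet {n : ℕ} (S : Finset (Fin n)) (k : ℕ) : Finset (Fin n) :=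
  S.image (fun i : Fin n => (⟨((i : ℕ) + (n - k % n)) % n, Nat.mod_lt _ i.pos⟩ : Fin n))

/-- The smallest index of a variable in `S`. -/
noncomputable def minIdx {n : ℕ} (S : Finset (Fin n)) : ℕ :=
  sInf {m : ℕ | ∃ i ∈ S, (i : ℕ) = m}

/-- The largest index of a variable in `S`. -/
noncomputable def maxIdx {n : ℕ} (S : Finset (Fin n)) : ℕ :=
  sSup {m : ℕ | ∃ i ∈ S, (i : ℕ) = m}

/-- Shifting the monomial `p_S` from `g_a` to `g_b`: it replaces `g_a` by `g_a ⊕ p_S`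
and `g_b` by `g_b ⊕ p_{S−(a−b)}`, leaving all other feedback functions unchanged. -/
def shiftNLFSR {n : ℕ} (F : Fin n → (Fin n → Bool) → Bool) (a b : Fin n)
    (S : Finset (Fin n)) : Fin n → (Fin n → Bool) → Bool :=
  fun i s =>
    if i = a then xor (F i s) (monomial n S s)
    else if i = b then xor (F i s) (monomial n (shiftSet S ((a : ℕ) - (b : ℕ))) s)
    else F i s

/-- A Fibonacci NLFSR: `f_i = x_{i+1}` for `0 ≤ i < n−1`, and `f_{n−1} = x_0 ⊕ g_{n−1}`
is singular with `0 ∉ dep(g_{n−1})`. -/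
def FibonacciP (n : ℕ) (F : Fin n → (Fin n → Bool) → Bool) : Prop :=
  (∀ i : Fin n, (i : ℕ) < n - 1 → ∀ s, F i s = s (succIdx i)) ∧
  (∀ i : Fin n, (i : ℕ) = n - 1 → succIdx i ∉ depF n (gfun n F i))

/-- A finite directed graph: a finite vertex set together with a finite edge set. -/
structure DiGraph (V : Type) [DecidableEq V] where
  verts : Finset V
  edges : Finset (V × V)

/-- One substitution step `sub(v_i, v_j)`: if `v_i` has exactly one incoming edge,
coming from `v_j ≠ v_i`, remove `v_i` and, for each outgoing edge `(v_i, v_k)`,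
add the edge `(v_j, v_k)`. -/
def SubStep {V : Type} [DecidableEq V] (G G' : DiGraph V) : Prop :=
  ∃ i j : V, i ∈ G.verts ∧ j ∈ G.verts ∧ i ≠ j ∧
    G.edges.filter (fun e => e.2 = i) = {(j, i)} ∧
    G' = ⟨G.verts.erase i,
      (G.edges.filter (fun e => e.1 ≠ i ∧ e.2 ≠ i)) ∪
        ((G.edges.filter (fun e => e.1 = i)).image (fun e => (j, e.2)))⟩

/-- A graph is reducible to the single vertex `v` if some finite sequence of
substitutions transforms it into a one-vertex graph on `v`. -/
def ReducibleTo {V : Type} [DecidableEq V] (G : DiGraph V) (v : V) : Prop :=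
  ∃ G' : DiGraph V, Relation.ReflTransGen SubStep G G' ∧ G'.verts = {v}

/-- The feedback graph of an NLFSR: there is an edge from `v_i` to `v_j`
iff `i ∈ dep(f_j)`. -/
def feedbackGraph (n : ℕ) (F : Fin n → (Fin n → Bool) → Bool) : DiGraph (Fin n) :=
  ⟨Finset.univ, Finset.univ.filter (fun e : Fin n × Fin n => e.1 ∈ depF n (F e.2))⟩

/-- XOR of the Booleans `f x` over `x ∈ A`. -/
def xorSum {α : Type*} (A : Finset α) (f : α → Bool) : Bool :=
  decide (Odd (A.filter (fun x => f x = true)).card)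

/-- The feedback functions `g̃_i` of the fully shifted Galois NLFSR obtained from a
Fibonacci NLFSR whose feedback monomial supports are `P`, with terminal bit `τ`. -/
noncomputable def galoisG (n : ℕ) (P : Finset (Finset (Fin n))) (τ : ℕ) :
    Fin n → (Fin n → Bool) → Bool :=
  fun i s =>
    xor
      (xorSum (P.filter (fun S => minIdx S ≤ n - 1 - τ ∧ n - 1 - minIdx S = (i : ℕ)))
        (fun S => monomial n (shiftSet S (minIdx S)) s))
      (if (i : ℕ) = τ then
        xorSum (P.filter (fun S => n - 1 - τ < minIdx S))
          (fun S => monomial n (shiftSet S (n - 1 - τ)) s)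
      else false)

/-!
Over `Bool`, which Mathlib makes the Boolean ring 𝔽₂ with `+ = xor` and `* = and`, the output
`z` of the fully shifted NLFSR `Ñ`, from any initial state, obeys the recurrence
`z (t + n) = z t + ∑_{S ∈ P} ∏_{j ∈ S} z (t + j)` of `N`. Telescoping `f̃_i = x_{i+1} ⊕ g̃_i`
from bit `n - 1` down to bit `0` gives `z (t + n) = z t + ∑_e g̃_{n-1-e} (state (t + e))`. Bits
`0, …, τ` of `Ñ` form a plain shift register, so bit `j ≤ τ` at time `t` is `z (t + j)`; hence the
monomial `p_{S-k}` of `g̃_{n-1-k}`, read at time `t + k`, is `∏_{j ∈ S} z (t + j)`. By Möbius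
inversion of its ANF, the Fibonacci NLFSR started from the first `n` outputs of `Ñ` obeys the same
recurrence, so the two outputs agree. Uniformity holds because each `g̃_i` is a sum of monomials in
`x_0, …, x_τ` and vanishes unless `τ ≤ i ≤ n - 2`.
-/

open Finset

theorem Bool.natCast_eq_decide_odd (k : ℕ) : (k : Bool) = decide (Odd k) := by
  induction k with
  | zero => rfl
  | succ k ih =>
    rw [Nat.cast_succ, ih]
    by_cases h : Odd k <;> simp [h, Nat.odd_add_one] <;> rfl

theorem xorSum_eq_sum {α : Type*} (A : Finset α) (f : α → Bool) :
    xorSum A f = ∑ x ∈ A, f x := by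
  have hf : ∀ x, f x = if f x = true then 1 else 0 := fun x => by cases f x <;> rfl
  rw [sum_congr rfl fun x _ => hf x, sum_boole, Bool.natCast_eq_decide_odd]
  rfl

theorem BooleanRing.nsmul_eq_zero_of_even {α : Type*} [BooleanRing α] {k : ℕ} (hk : Even k)
    (b : α) : k • b = 0 := by
  obtain ⟨m, rfl⟩ := hk
  rw [← two_mul, mul_nsmul, two_nsmul, BooleanRing.add_self, nsmul_zero]

section

variable {n : ℕ}

theorem monomial_indicator (S X : Finset (Fin n)) :
    monomial n S (fun i => decide (i ∈ X)) = decide (S ⊆ X) := by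
  simp [monomial, subset_iff]

theorem anfCoeff_eq_sum (f : (Fin n → Bool) → Bool) (S : Finset (Fin n)) :
    anfCoeff n f S = ∑ T ∈ S.powerset, f (fun i => decide (i ∈ T)) :=
  xorSum_eq_sum _ _

theorem eq_sum_monomial_anfCoeff (f : (Fin n → Bool) → Bool) (s : Fin n → Bool) :
    f s = ∑ S ∈ univ.filter (fun S => anfCoeff n f S = true), monomial n S s := by
  set X : Finset (Fin n) := univ.filter (fun i => s i = true)
  have hs : s = fun i => decide (i ∈ X) := by
    funext i; cases h : s i <;> simp [X, h]
  calc f s = f (fun i => decide (i ∈ X)) := by rw [← hs]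
    _ = ∑ T ∈ X.powerset, #(Icc T X) • f (fun i => decide (i ∈ T)) := by
      rw [sum_eq_single_of_mem X (mem_powerset_self X)]
      · simp
      · intro T hT hTX
        rw [card_Icc_finset (mem_powerset.mp hT)]
        apply BooleanRing.nsmul_eq_zero_of_even
        apply (Nat.even_pow' _).mpr even_two
        have := card_lt_card (ssubset_of_subset_of_ne (mem_powerset.mp hT) hTX)
        omega
    _ = ∑ S ∈ X.powerset, anfCoeff n f S := by
      simp_rw [← sum_const, anfCoeff_eq_sum]
      refine (sum_comm' fun S T => ?_).symm
      simp only [mem_powerset, mem_Icc]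
      constructor
      · rintro ⟨hSX, hTS⟩; exact ⟨⟨hTS, hSX⟩, hTS.trans hSX⟩
      · rintro ⟨⟨hTS, hSX⟩, -⟩; exact ⟨hSX, hTS⟩
    _ = ∑ S, anfCoeff n f S * monomial n S s := by
      have hX : univ.filter (· ⊆ X) = X.powerset := by ext; simp
      rw [hs, ← sum_filter_add_sum_filter_not univ (· ⊆ X), hX]
      simp only [monomial_indicator]
      have h0 : ∑ S ∈ univ.filter (fun S => ¬ S ⊆ X), anfCoeff n f S * decide (S ⊆ X) = 0 :=
        sum_eq_zero fun S hS => by simp only [(mem_filter.mp hS).2, decide_false]; exact mul_zero _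
      rw [h0, add_zero]
      exact sum_congr rfl fun S hS => by
        simp only [mem_powerset.mp hS, decide_true]
        exact (mul_one _).symm
    _ = ∑ S ∈ univ.filter (fun S => anfCoeff n f S = true), monomial n S s := by
      rw [sum_filter]
      refine sum_congr rfl fun S _ => ?_
      cases anfCoeff n f S
      exacts [zero_mul _, one_mul _]

theorem monomial_update_of_notMem {S : Finset (Fin n)} {k : Fin n} (hk : k ∉ S)
    (s : Fin n → Bool) (b : Bool) : monomial n S (Function.update s k b) = monomial n S s := by
  simp only [monomial]
  congr! 3 with i hi
  rw [Function.update_of_ne (ne_of_mem_of_not_mem hi hk)]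

theorem exists_mem_of_mem_depF {ι : Type*} {f : (Fin n → Bool) → Bool} (Q : Finset ι)
    (m : ι → Finset (Fin n)) (hf : ∀ s, f s = ∑ x ∈ Q, monomial n (m x) s) {k : Fin n}
    (hk : k ∈ depF n f) : ∃ x ∈ Q, k ∈ m x := by
  by_contra! h
  obtain ⟨s, hs⟩ := (mem_filter.mp hk).2
  apply hs
  rw [hf, hf]
  exact sum_congr rfl fun x hx => by
    rw [monomial_update_of_notMem (h x hx), monomial_update_of_notMem (h x hx)]

theorem minIdx_le {S : Finset (Fin n)} {i : Fin n} (hi : i ∈ S) : minIdx S ≤ i :=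
  Nat.sInf_le ⟨i, hi, rfl⟩

theorem bddAbove_vals (S : Finset (Fin n)) : BddAbove {m : ℕ | ∃ i ∈ S, (i : ℕ) = m} :=
  ⟨n, by rintro _ ⟨j, -, rfl⟩; exact j.is_lt.le⟩

theorem le_maxIdx {S : Finset (Fin n)} {i : Fin n} (hi : i ∈ S) : (i : ℕ) ≤ maxIdx S :=
  le_csSup (bddAbove_vals S) ⟨i, hi, rfl⟩

theorem exists_val_eq_minIdx {S : Finset (Fin n)} {i : Fin n} (hi : i ∈ S) :
    ∃ j ∈ S, (j : ℕ) = minIdx S :=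
  Nat.sInf_mem (s := {m : ℕ | ∃ j ∈ S, (j : ℕ) = m}) ⟨i, i, hi, rfl⟩

theorem exists_val_eq_maxIdx {S : Finset (Fin n)} {i : Fin n} (hi : i ∈ S) :
    ∃ j ∈ S, (j : ℕ) = maxIdx S :=
  Nat.sSup_mem (s := {m : ℕ | ∃ j ∈ S, (j : ℕ) = m}) ⟨i, i, hi, rfl⟩ (bddAbove_vals S)

theorem maxIdx_sub_minIdx_eq_zero {S : Finset (Fin n)} (hS : S.card ≤ 1) :
    maxIdx S - minIdx S = 0 := by
  rcases S.eq_empty_or_nonempty with rfl | ⟨i, hi⟩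
  · simp [maxIdx]
  obtain ⟨j, hj, hjmax⟩ := exists_val_eq_maxIdx hi
  obtain ⟨j', hj', hjmin⟩ := exists_val_eq_minIdx hi
  rw [← hjmax, ← hjmin, card_le_one.mp hS j hj j' hj', Nat.sub_self]

theorem maxIdx_sub_minIdx_le {S : Finset (Fin n)} (hS : ∀ j ∈ S, 1 ≤ (j : ℕ)) :
    maxIdx S - minIdx S ≤ n - 2 := by
  rcases S.eq_empty_or_nonempty with rfl | ⟨i, hi⟩
  · simp [maxIdx]
  obtain ⟨j, hj, hjmax⟩ := exists_val_eq_maxIdx hi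
  obtain ⟨j', hj', hjmin⟩ := exists_val_eq_minIdx hi
  have := hS j' hj'
  have := j.is_lt
  omega

theorem mod_shift_eq_sub {k : ℕ} {i : Fin n} (hki : k ≤ i) :
    ((i : ℕ) + (n - k % n)) % n = i - k := by
  have hkn : k < n := by omega
  rw [Nat.mod_eq_of_lt hkn, Nat.mod_eq_sub_mod (by omega), Nat.mod_eq_of_lt (by omega)]
  omega

theorem mem_shiftSet {S : Finset (Fin n)} {k : ℕ} (hk : ∀ i ∈ S, k ≤ (i : ℕ)) {j : Fin n} :
    j ∈ shiftSet S k ↔ ∃ i ∈ S, (j : ℕ) = i - k := by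
  simp only [shiftSet, mem_image, Fin.ext_iff]
  constructor
  · rintro ⟨i, hi, hij⟩
    exact ⟨i, hi, hij.symm.trans (mod_shift_eq_sub (hk i hi))⟩
  · rintro ⟨i, hi, hj⟩
    exact ⟨i, hi, (mod_shift_eq_sub (hk i hi)).trans hj.symm⟩

theorem monomial_shiftSet {S : Finset (Fin n)} {k : ℕ} (hk : ∀ i ∈ S, k ≤ (i : ℕ))
    (s : Fin n → Bool) :
    monomial n (shiftSet S k) s = decide (∀ i ∈ S, s ⟨i - k, by omega⟩ = true) := by
  simp only [monomial, shiftSet, forall_mem_image]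
  congr! 4 with i hi
  exact congrArg s (Fin.ext (mod_shift_eq_sub (hk i hi)))

theorem apply_eq_add_gfun (F : Fin n → (Fin n → Bool) → Bool) (i : Fin n) (s : Fin n → Bool) :
    F i s = s (succIdx i) + gfun n F i s := by
  rw [gfun, Bool.add_eq_xor]
  cases F i s <;> cases s (succIdx i) <;> rfl

theorem gfun_eq_of_eq_xor {F G : Fin n → (Fin n → Bool) → Bool}
    (hF : ∀ i s, F i s = xor (s (succIdx i)) (G i s)) (i : Fin n) : gfun n F i = G i := by
  funext s
  rw [gfun, hF]
  cases s (succIdx i) <;> cases G i s <;> rfl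

theorem le_terminalBit {F : Fin n → (Fin n → Bool) → Bool} {m : ℕ} (hm : m < n)
    (hF : ∀ j : Fin n, (j : ℕ) < m → ∀ s, F j s = s (succIdx j)) : m ≤ terminalBit n F :=
  le_csSup ⟨n, fun _ hi => hi.1.le⟩ ⟨hm, hF⟩

theorem eq_of_forall_lt_of_recurrence {α : Type*} (Φ : (Fin n → α) → α) {y z : ℕ → α}
    (hy : ∀ t, y (t + n) = Φ fun j => y (t + j)) (hz : ∀ t, z (t + n) = Φ fun j => z (t + j))
    (h : ∀ t < n, y t = z t) : y = z := by
  funext t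
  induction t using Nat.strong_induction_on with
  | _ t ih =>
    by_cases ht : t < n
    · exact h t ht
    obtain ⟨u, rfl⟩ : ∃ u, t = u + n := ⟨t - n, by omega⟩
    rw [hy, hz]
    congr 1
    funext j
    exact ih _ (by have := j.is_lt; omega)

section Dynamics

variable {F : Fin n → (Fin n → Bool) → Bool} {s0 : Fin n → Bool}

theorem stateAt_succ_apply (t : ℕ) (i : Fin n) :
    stateAt n F s0 (t + 1) i = F i (stateAt n F s0 t) := by
  rw [stateAt, Function.iterate_succ_apply']
  rfl

theorem stateAt_succ_apply_eq_add_gfun (t : ℕ) (i : Fin n) :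
    stateAt n F s0 (t + 1) i = stateAt n F s0 t (succIdx i) + gfun n F i (stateAt n F s0 t) := by
  rw [stateAt_succ_apply, apply_eq_add_gfun F]

theorem succIdx_val_of_lt {i : Fin n} (h : (i : ℕ) + 1 < n) : (succIdx i : ℕ) = i + 1 :=
  Nat.mod_eq_of_lt h

theorem succIdx_val_of_eq {i : Fin n} (h : (i : ℕ) = n - 1) : (succIdx i : ℕ) = 0 := by
  have := i.pos
  simp only [succIdx, h, Nat.sub_add_cancel this, Nat.mod_self]

theorem stateAt_apply_eq_of_shift {m : ℕ}
    (hF : ∀ j : Fin n, (j : ℕ) < m → ∀ s, F j s = s (succIdx j)) {j : Fin n} (hj : (j : ℕ) ≤ m)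
    (t : ℕ) : stateAt n F s0 t j = stateAt n F s0 (t + j) ⟨0, j.pos⟩ := by
  obtain ⟨d, hd⟩ := j
  induction d generalizing t with
  | zero => rfl
  | succ d ih =>
    have hdm : d + 1 ≤ m := hj
    have hstep : stateAt n F s0 (t + 1) ⟨d, by omega⟩ = stateAt n F s0 t ⟨d + 1, hd⟩ := by
      rw [stateAt_succ_apply, hF ⟨d, by omega⟩ (show d < m by omega)]
      exact congrArg _ (Fin.ext (succIdx_val_of_lt hd))
    rw [← hstep, ih (t + 1) (by omega) (show d ≤ m by omega)]
    exact congrArg (stateAt n F s0 · _) (by simp only; omega)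

theorem stateAt_add_length (hn : 0 < n) (t : ℕ) :
    stateAt n F s0 (t + n) ⟨0, hn⟩ = stateAt n F s0 t ⟨0, hn⟩ +
      ∑ e ∈ range n, gfun n F ⟨n - 1 - e, by omega⟩ (stateAt n F s0 (t + e)) := by
  have htel : ∀ d < n, stateAt n F s0 (t + d + 1) ⟨n - 1 - d, by omega⟩ =
      stateAt n F s0 t ⟨0, hn⟩ +
        ∑ e ∈ range (d + 1), gfun n F ⟨n - 1 - e, by omega⟩ (stateAt n F s0 (t + e)) := by
    intro d hd
    induction d with
    | zero =>
      rw [stateAt_succ_apply_eq_add_gfun, sum_range_one]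
      congr 2
      exact Fin.ext (succIdx_val_of_eq rfl)
    | succ d ih =>
      rw [stateAt_succ_apply_eq_add_gfun, sum_range_succ, ← add_assoc (stateAt n F s0 t _),
        ← ih (by omega)]
      congr 2
      exact Fin.ext ((succIdx_val_of_lt (show n - 1 - (d + 1) + 1 < n by omega)).trans
        (show n - 1 - (d + 1) + 1 = n - 1 - d by omega))
  obtain ⟨m, rfl⟩ : ∃ m, n = m + 1 := ⟨n - 1, by omega⟩
  have := htel m (by omega)
  rw [add_assoc] at this
  simpa using this

end Dynamics

theorem FibonacciP.stateAt_add_length {F : Fin n → (Fin n → Bool) → Bool} (hFib : FibonacciP n F)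
    {l : Fin n} (hl : (l : ℕ) = n - 1) (s0 : Fin n → Bool) (t : ℕ) :
    stateAt n F s0 (t + n) ⟨0, l.pos⟩ = F l fun j => stateAt n F s0 (t + j) ⟨0, l.pos⟩ := by
  have h := stateAt_apply_eq_of_shift (s0 := s0) hFib.1 hl.le (t + 1)
  rw [stateAt_succ_apply, show t + 1 + (l : ℕ) = t + n by omega] at h
  rw [← h]
  congr 1
  funext j
  exact stateAt_apply_eq_of_shift hFib.1 (by omega) t

/-- The amount by which the fully shifted NLFSR shifts the monomial `p_S` of `g_{n-1}`:
it lands in `g̃_{n-1-k}` as `p_{S-k}`. -/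
noncomputable def galoisShift (n τ : ℕ) (S : Finset (Fin n)) : ℕ :=
  min (minIdx S) (n - 1 - τ)

section Galois

variable {P : Finset (Finset (Fin n))} {τ : ℕ}

theorem galoisShift_le {S : Finset (Fin n)} {j : Fin n} (hj : j ∈ S) : galoisShift n τ S ≤ j :=
  (min_le_left _ _).trans (minIdx_le hj)

theorem galoisShift_le_sub (S : Finset (Fin n)) : galoisShift n τ S ≤ n - 1 - τ :=
  min_le_right _ _

theorem galoisShift_eq_or (S : Finset (Fin n)) :
    galoisShift n τ S = minIdx S ∨ galoisShift n τ S = n - 1 - τ :=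
  min_choice _ _

theorem sub_galoisShift_le {S : Finset (Fin n)} (hS : maxIdx S - minIdx S ≤ τ) {j : Fin n}
    (hj : j ∈ S) : (j : ℕ) - galoisShift n τ S ≤ τ := by
  have := le_maxIdx hj
  have := j.is_lt
  unfold galoisShift
  omega

theorem galoisG_eq_sum (hτ : τ ≤ n - 1) (i : Fin n) (s : Fin n → Bool) :
    galoisG n P τ i s = ∑ S ∈ P with n - 1 - galoisShift n τ S = i,
      monomial n (shiftSet S (galoisShift n τ S)) s := by
  simp only [galoisG, xorSum_eq_sum, ← Bool.add_eq_xor, ← Bool.zero_eq_false, sum_filter]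
  have hite : (if (i : ℕ) = τ then
        ∑ S ∈ P, (if n - 1 - τ < minIdx S then monomial n (shiftSet S (n - 1 - τ)) s else 0)
      else 0) =
      ∑ S ∈ P, if (i : ℕ) = τ ∧ n - 1 - τ < minIdx S then
        monomial n (shiftSet S (n - 1 - τ)) s else 0 := by
    split_ifs with hi <;> simp [hi]
  rw [hite, ← sum_add_distrib]
  refine sum_congr rfl fun S _ => ?_
  unfold galoisShift
  rcases le_or_gt (minIdx S) (n - 1 - τ) with hS | hS
  · rw [min_eq_left hS]
    split_ifs <;> first | omega | simp
  · rw [min_eq_right hS.le]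
    split_ifs <;> first | omega | simp

theorem galoisG_eq_false_of_lt (hτ : τ ≤ n - 1) {i : Fin n} (hi : (i : ℕ) < τ)
    (s : Fin n → Bool) : galoisG n P τ i s = false := by
  rw [galoisG_eq_sum hτ]
  refine sum_eq_zero fun S hS => absurd (mem_filter.mp hS).2 ?_
  have := galoisShift_le_sub (τ := τ) S
  omega

theorem bounds_of_mem_depF_galoisG (hP1 : ∀ S ∈ P, ∀ j ∈ S, 1 ≤ (j : ℕ))
    (hspan : ∀ S ∈ P, maxIdx S - minIdx S ≤ τ) (hτ : τ ≤ n - 2) {i k : Fin n}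
    (hk : k ∈ depF n (galoisG n P τ i)) : (k : ℕ) ≤ τ ∧ τ ≤ i ∧ (i : ℕ) + 1 < n := by
  obtain ⟨S, hS, hkS⟩ := exists_mem_of_mem_depF _ _ (galoisG_eq_sum (by omega) i) hk
  obtain ⟨hSP, hSi⟩ := mem_filter.mp hS
  obtain ⟨j, hj, hkj⟩ := (mem_shiftSet fun j hj => galoisShift_le hj).mp hkS
  obtain ⟨j₀, hj₀, hmin⟩ := exists_val_eq_minIdx hj
  have := hP1 S hSP j₀ hj₀
  have := sub_galoisShift_le (hspan S hSP) hj
  have := j₀.is_lt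
  have := galoisShift_le_sub (τ := τ) S
  have := galoisShift_eq_or S (τ := τ)
  omega

variable {Ft : Fin n → (Fin n → Bool) → Bool}

theorem galois_feedback_of_lt (hFt : ∀ i s, Ft i s = xor (s (succIdx i)) (galoisG n P τ i s))
    (hτ : τ ≤ n - 1) (j : Fin n) (hj : (j : ℕ) < τ) (s : Fin n → Bool) :
    Ft j s = s (succIdx j) := by
  rw [hFt, galoisG_eq_false_of_lt hτ hj, Bool.xor_false]

theorem uniformN_of_galoisG (hFt : ∀ i s, Ft i s = xor (s (succIdx i)) (galoisG n P τ i s))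
    (hP1 : ∀ S ∈ P, ∀ j ∈ S, 1 ≤ (j : ℕ)) (hspan : ∀ S ∈ P, maxIdx S - minIdx S ≤ τ)
    (hτ : τ ≤ n - 2) : UniformN n Ft := by
  refine ⟨fun i hi => ?_, fun i _ k hk => ?_⟩
  · rw [gfun_eq_of_eq_xor hFt] at hi
    obtain ⟨hle, hτi, hlt⟩ := bounds_of_mem_depF_galoisG hP1 hspan hτ hi
    rw [succIdx_val_of_lt hlt] at hle
    omega
  · rw [gfun_eq_of_eq_xor hFt] at hk
    have hterm := le_terminalBit (by have := i.pos; omega) (galois_feedback_of_lt hFt (by omega))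
    exact (bounds_of_mem_depF_galoisG hP1 hspan hτ hk).1.trans hterm

theorem galois_monomial_stateAt (hFt : ∀ i s, Ft i s = xor (s (succIdx i)) (galoisG n P τ i s))
    (hτ : τ ≤ n - 1) (hn : 0 < n) {S : Finset (Fin n)} (hS : maxIdx S - minIdx S ≤ τ)
    (s0 : Fin n → Bool) (t : ℕ) :
    monomial n (shiftSet S (galoisShift n τ S)) (stateAt n Ft s0 (t + galoisShift n τ S)) =
      monomial n S fun j => stateAt n Ft s0 (t + j) ⟨0, hn⟩ := by
  rw [monomial_shiftSet fun j hj => galoisShift_le hj, monomial]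
  congr! 3 with j hj
  rw [stateAt_apply_eq_of_shift (galois_feedback_of_lt hFt hτ) (sub_galoisShift_le hS hj),
    Fin.val_mk, add_assoc, Nat.add_sub_cancel' (galoisShift_le hj)]

theorem galois_stateAt_add_length
    (hFt : ∀ i s, Ft i s = xor (s (succIdx i)) (galoisG n P τ i s))
    (hspan : ∀ S ∈ P, maxIdx S - minIdx S ≤ τ) (hτ : τ ≤ n - 1) (hn : 0 < n)
    (s0 : Fin n → Bool) (t : ℕ) :
    stateAt n Ft s0 (t + n) ⟨0, hn⟩ = stateAt n Ft s0 t ⟨0, hn⟩ +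
      ∑ S ∈ P, monomial n S fun j => stateAt n Ft s0 (t + j) ⟨0, hn⟩ := by
  rw [stateAt_add_length hn]
  congr 1
  calc ∑ e ∈ range n, gfun n Ft ⟨n - 1 - e, _⟩ (stateAt n Ft s0 (t + e))
      = ∑ e ∈ range n, ∑ S ∈ P with galoisShift n τ S = e, monomial n
          (shiftSet S (galoisShift n τ S)) (stateAt n Ft s0 (t + galoisShift n τ S)) := by
        refine sum_congr rfl fun e he => ?_
        rw [gfun_eq_of_eq_xor hFt, galoisG_eq_sum hτ]
        refine sum_congr (filter_congr fun S _ => ?_) fun S hS => by rw [(mem_filter.mp hS).2]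
        have := galoisShift_le_sub (τ := τ) S
        have := mem_range.mp he
        simp only
        omega
    _ = ∑ S ∈ P,
          monomial n (shiftSet S (galoisShift n τ S)) (stateAt n Ft s0 (t + galoisShift n τ S)) :=
        sum_fiberwise_of_maps_to (fun S _ => mem_range.mpr (by
          have := galoisShift_le_sub (τ := τ) S
          omega)) _
    _ = _ := sum_congr rfl fun S hS => galois_monomial_stateAt hFt hτ hn (hspan S hS) s0 t

theorem equivalentN_of_galoisG {F : Fin n → (Fin n → Bool) → Bool} (hFib : FibonacciP n F)
    {l : Fin n} (hl : (l : ℕ) = n - 1)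
    (hFl : ∀ w, F l w = w ⟨0, l.pos⟩ + ∑ S ∈ P, monomial n S w)
    (hFt : ∀ i s, Ft i s = xor (s (succIdx i)) (galoisG n P τ i s))
    (hspan : ∀ S ∈ P, maxIdx S - minIdx S ≤ τ) (hτ : τ ≤ n - 1) : EquivalentN n Ft F := by
  have hn := l.pos
  let z t := stateAt n Ft (fun _ => false) t ⟨0, hn⟩
  refine ⟨fun _ => false, fun j => z j, fun t k hk => ?_⟩
  obtain rfl : k = ⟨0, hn⟩ := Fin.ext hk
  refine congrFun (eq_of_forall_lt_of_recurrence (F l) (y := z)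
    (z := fun t => stateAt n F (fun j => z j) t ⟨0, hn⟩) ?_ ?_ ?_) t
  · intro t
    rw [hFl]
    exact galois_stateAt_add_length hFt hspan hτ hn _ t
  · exact FibonacciP.stateAt_add_length hFib hl _
  · intro t ht
    calc z t = stateAt n F (fun j => z j) 0 ⟨t, ht⟩ := rfl
      _ = _ := by rw [stateAt_apply_eq_of_shift hFib.1 (show t ≤ n - 1 by omega), zero_add]

end Galois

end

theorem fully_shifted_uniform_and_equivalent_general (n : ℕ)
    (F : Fin n → (Fin n → Bool) → Bool) (hFib : FibonacciP n F)
    (l : Fin n) (hl : (l : ℕ) = n - 1)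
    (P : Finset (Finset (Fin n)))
    (hP : ∀ S : Finset (Fin n), S ∈ P ↔ anfCoeff n (gfun n F l) S = true)
    (hPsub : ∀ S ∈ P, S.Nonempty ∧ ∀ i ∈ S, 1 ≤ (i : ℕ))
    (τ : ℕ)
    (hτ : τ = (P.filter (fun S => 2 ≤ S.card)).sup (fun S => maxIdx S - minIdx S))
    (Ft : Fin n → (Fin n → Bool) → Bool)
    (hFt : ∀ (i : Fin n) (s : Fin n → Bool), Ft i s = xor (s (succIdx i)) (galoisG n P τ i s)) :
    UniformN n Ft ∧ EquivalentN n Ft F := by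
  have hspan : ∀ S ∈ P, maxIdx S - minIdx S ≤ τ := fun S hS => by
    rcases le_or_gt 2 S.card with h | h
    · exact hτ ▸ le_sup (f := fun S => maxIdx S - minIdx S) (mem_filter.mpr ⟨hS, h⟩)
    · rw [maxIdx_sub_minIdx_eq_zero (by omega)]
      exact Nat.zero_le τ
  have hτn : τ ≤ n - 2 :=
    hτ ▸ Finset.sup_le fun S hS => maxIdx_sub_minIdx_le (hPsub S (mem_filter.mp hS).1).2
  have hPanf : univ.filter (fun S => anfCoeff n (gfun n F l) S = true) = P := by
    ext S
    simp [hP]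
  have hFl : ∀ w, F l w = w ⟨0, l.pos⟩ + ∑ S ∈ P, monomial n S w := fun w => by
    rw [apply_eq_add_gfun F, eq_sum_monomial_anfCoeff (gfun n F l), hPanf,
      (Fin.ext (succIdx_val_of_eq hl) : succIdx l = ⟨0, l.pos⟩)]
  exact ⟨uniformN_of_galoisG hFt (fun S hS => (hPsub S hS).2) hspan hτn,
    equivalentN_of_galoisG hFib hl hFl hFt hspan (by omega)⟩

/-- Algorithm 1, correctness: the fully shifted Galois NLFSR `Ñ`
computed from a Fibonacci NLFSR `N` is uniform and equivalent to `N`. -/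
theorem fully_shifted_uniform_and_equivalent (n : ℕ)
    (F : Fin n → (Fin n → Bool) → Bool) (hFib : FibonacciP n F)
    (l : Fin n) (hl : (l : ℕ) = n - 1)
    (P : Finset (Finset (Fin n)))
    (hP : ∀ S : Finset (Fin n), S ∈ P ↔ anfCoeff n (gfun n F l) S = true)
    (hPsub : ∀ S ∈ P, S.Nonempty ∧ ∀ i ∈ S, 1 ≤ (i : ℕ))
    (hbig : ∃ S ∈ P, 2 ≤ S.card)
    (τ : ℕ)
    (hτ : τ = (P.filter (fun S => 2 ≤ S.card)).sup (fun S => maxIdx S - minIdx S))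
    (Ft : Fin n → (Fin n → Bool) → Bool)
    (hFt : ∀ (i : Fin n) (s : Fin n → Bool), Ft i s = xor (s (succIdx i)) (galoisG n P τ i s)) :
    UniformN n Ft ∧ EquivalentN n Ft F :=
  fully_shifted_uniform_and_equivalent_general n F hFib l hl P hP hPsub τ hτ Ft hFt
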